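/- Under the A-semantics (assert-based semantics) of S-CORE, ⟨POP x, σ⟩ ⇓ τ if and only if ⟨PUSH x, τ⟩ ⇓ σ, for all states σ, τ : Var → ℤ × List ℤ. -/

import Mathlib

inductive Term where
  | skip : Term
  | inc : String → Term
  | dec : String → Term
  | push : String → Term
  | pop : String → Term
  | seq : Term → Term → Term
  | forLoop : String → Term → Term

def inv : Term → Term
  | .skip => .skip
  | .inc x => .dec x
  | .dec x => .inc x
  | .push x => .pop x
  | .pop x => .push x
  | .seq p q => .seq (inv q) (inv p)
  | .forLoop x p => .forLoop x (inv p)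

abbrev AState := String → ℤ × List ℤ

def upd (σ : AState) (x : String) (p : ℤ × List ℤ) : AState :=
  fun y => if y = x then p else σ y

mutual
/-- The big-step A-semantics (assert-based, partial) of S-CORE. -/
inductive ABig : Term → AState → AState → Prop where
  | skip (σ) : ABig .skip σ σ
  | inc (x σ) : ABig (.inc x) σ (upd σ x ((σ x).1 + 1, (σ x).2))
  | dec (x σ) : ABig (.dec x) σ (upd σ x ((σ x).1 - 1, (σ x).2))
  | push (x σ) : ABig (.push x) σ (upd σ x (0, (σ x).1 :: (σ x).2))
  | pop {x σ h t} : σ x = (0, h :: t) → ABig (.pop x) σ (upd σ x (h, t))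
  | seq {p q σ ν τ} : ABig p σ ν → ABig q ν τ → ABig (.seq p q) σ τ
  | forFwd {x p σ τ} : (σ x).1 ≥ 0 → AIter p (σ x).1.toNat σ τ →
      ABig (.forLoop x p) σ τ
  | forBwd {x p σ τ} : (σ x).1 < 0 → AIter (inv p) (-(σ x).1).toNat σ τ →
      ABig (.forLoop x p) σ τ

inductive AIter : Term → ℕ → AState → AState → Prop where
  | base (p σ) : AIter p 0 σ σ
  | step {p n σ ν τ} : ABig p σ ν → AIter p n ν τ → AIter p (n+1) σ τ
end

def occurs (x : String) : Term → Prop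
  | .skip => False
  | .inc y => x = y
  | .dec y => x = y
  | .push y => x = y
  | .pop y => x = y
  | .seq p q => occurs x p ∨ occurs x q
  | .forLoop y p => x = y ∨ occurs x p

/-- Well-formed terms: the leading variable of a `FOR` never occurs in its body. -/
def WF : Term → Prop
  | .seq p q => WF p ∧ WF q
  | .forLoop x p => ¬ occurs x p ∧ WF p
  | _ => True

theorem upd_eq_update (σ : AState) (x : String) (p : ℤ × List ℤ) :
    upd σ x p = Function.update σ x p := by
  funext y
  simp only [upd, Function.update_apply]

theorem aBig_pop_iff {x : String} {σ τ : AState} :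
    ABig (.pop x) σ τ ↔ ∃ h t, σ x = (0, h :: t) ∧ τ = upd σ x (h, t) := by
  constructor
  · intro hpop
    cases hpop with
    | pop hx => exact ⟨_, _, hx, rfl⟩
  · rintro ⟨h, t, hx, rfl⟩
    exact ABig.pop hx

theorem aBig_push_iff {x : String} {σ τ : AState} :
    ABig (.push x) σ τ ↔ τ = upd σ x (0, (σ x).1 :: (σ x).2) := by
  constructor
  · rintro ⟨⟩
    rfl
  · rintro rfl
    exact ABig.push x σ

theorem asem_pop_push (x : String) (σ τ : AState) :
    ABig (.pop x) σ τ ↔ ABig (.push x) τ σ := by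
  simp only [aBig_pop_iff, aBig_push_iff, upd_eq_update]
  constructor
  · rintro ⟨h, t, hx, rfl⟩
    rw [Function.update_idem, Function.update_self, ← hx, Function.update_eq_self]
  · rintro rfl
    refine ⟨_, _, Function.update_self .., ?_⟩
    rw [Function.update_idem, Function.update_eq_self]
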